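/- arXiv:1909.00765 — 4 statements merged into one kernel-verified Lean document; each statement's English description precedes it below -/
import Mathlib

section
/- There is a constant C > 0 such that for all ζ ∈ ℂ with Re ζ > 0 and all natural numbers m < n, one has |∑_{j=m}^{n-1} 1/(ζ+j) − log((ζ+n)/(ζ+m))| ≤ C/|ζ+m|, where log is the principal branch. -/
/-! All `ζ + j` lie in the right half-plane, so the arguments never wrap and
`log ((ζ + n) / (ζ + m))` telescopes into `∑ log (1 + w_j)` with `w_j = (ζ + j)⁻¹`, `0 ≤ re w_j`.
On the closed right half-plane `‖w - log (1 + w)‖ = O(‖w‖² / (1 + ‖w‖))`: Taylor for small `w`, and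
`‖log (1 + w)‖ ≤ ‖w‖ + π / 2` for large `w`. With `b = ‖ζ + j‖` this is `O(1 / (b (b + 1)))`, and
`‖ζ + j‖² ≥ ‖ζ + m‖² + (j - m)²` makes these terms dominated by the telescoping sum
`∑ₖ 2 / ((a + k) (a + k + 1)) ≤ 2 / a`, `a = ‖ζ + m‖`. -/

open Complex Finset

lemma one_div_mul_add_one_le_of_sq_add_sq_le {a x b : ℝ} (ha : 0 < a) (hx : 0 ≤ x) (hb : 0 ≤ b)
    (h : a ^ 2 + x ^ 2 ≤ b ^ 2) :
    1 / (b * (b + 1)) ≤ 2 / ((a + x) * (a + x + 1)) := by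
  have h_sq : (a + x) ^ 2 ≤ 2 * b ^ 2 := by nlinarith [sq_nonneg (a - x)]
  have h_lin : a + x ≤ 2 * b :=
    (pow_le_pow_iff_left₀ (by positivity) (by positivity) two_ne_zero).1 (by nlinarith)
  rw [div_le_div_iff₀ (by nlinarith) (by positivity)]
  nlinarith

lemma sum_range_one_div_mul_add_one_le {a : ℝ} (ha : 0 < a) (N : ℕ) :
    ∑ k ∈ range N, 1 / ((a + k) * (a + k + 1)) ≤ 1 / a := by
  have h_tel : ∀ k : ℕ, 1 / ((a + k) * (a + k + 1)) = 1 / (a + k) - 1 / (a + (k + 1 : ℕ)) := by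
    intro k
    have : 0 < a + k := by positivity
    push_cast
    field_simp
    ring
  simp only [h_tel, sum_range_sub', Nat.cast_zero, add_zero]
  have : 0 ≤ 1 / (a + N) := by positivity
  linarith

namespace Complex

lemma sq_norm_add_sq_le_sq_norm_add_ofReal {z : ℂ} (hz : 0 ≤ z.re) {x : ℝ} (hx : 0 ≤ x) :
    ‖z‖ ^ 2 + x ^ 2 ≤ ‖z + x‖ ^ 2 := by
  simp only [Complex.sq_norm, normSq_apply, add_re, add_im, ofReal_re, ofReal_im, add_zero]
  nlinarith [mul_nonneg hz hx]

lemma log_mul_of_re_pos {x y : ℂ} (hx : 0 < x.re) (hy : 0 < y.re) :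
    log (x * y) = log x + log y := by
  have hx' := abs_lt.1 (abs_arg_lt_pi_div_two_iff.2 (Or.inl hx))
  have hy' := abs_lt.1 (abs_arg_lt_pi_div_two_iff.2 (Or.inl hy))
  exact log_mul (ne_of_apply_ne re hx.ne') (ne_of_apply_ne re hy.ne')
    ⟨by linarith, by linarith⟩

lemma inv_re_nonneg {z : ℂ} (hz : 0 ≤ z.re) : 0 ≤ z⁻¹.re := by
  rw [inv_re]
  exact div_nonneg hz (normSq_nonneg z)

lemma norm_log_one_add_le_of_re_nonneg {w : ℂ} (hw : 0 ≤ w.re) :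
    ‖log (1 + w)‖ ≤ ‖w‖ + Real.pi / 2 := by
  have h_one_le : 1 ≤ ‖1 + w‖ :=
    (by rw [add_re, one_re]; linarith : 1 ≤ (1 + w).re).trans (re_le_norm _)
  have h_log_le : Real.log ‖1 + w‖ ≤ ‖w‖ := by
    linarith [Real.log_le_sub_one_of_pos (zero_lt_one.trans_le h_one_le),
      norm_add_le 1 w, norm_one (α := ℂ)]
  have h_arg : |arg (1 + w)| ≤ Real.pi / 2 :=
    abs_arg_le_pi_div_two_iff.2 (by rw [add_re, one_re]; linarith)
  calc ‖log (1 + w)‖ ≤ |(log (1 + w)).re| + |(log (1 + w)).im| := norm_le_abs_re_add_abs_im _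
    _ ≤ ‖w‖ + Real.pi / 2 := by
      rw [log_re, log_im, abs_of_nonneg (Real.log_nonneg h_one_le)]
      exact add_le_add h_log_le h_arg

lemma norm_sub_log_one_add_le_of_re_nonneg {w : ℂ} (hw : 0 ≤ w.re) :
    ‖w - log (1 + w)‖ ≤ 20 * (‖w‖ ^ 2 / (1 + ‖w‖)) := by
  set t := ‖w‖
  have ht : 0 ≤ t := norm_nonneg w
  rw [mul_div_assoc', le_div_iff₀ (by positivity)]
  rcases le_or_gt t (1 / 2) with h_small | h_large
  · have h_taylor : ‖w - log (1 + w)‖ ≤ t ^ 2 * (1 - t)⁻¹ / 2 := by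
      rw [norm_sub_rev]
      exact norm_log_one_add_sub_self_le (by linarith)
    have h_inv : (1 - t)⁻¹ ≤ 2 := by
      rw [inv_le_comm₀ (by linarith) (by norm_num)]
      linarith
    nlinarith [mul_le_mul_of_nonneg_left h_inv (sq_nonneg t)]
  · have h_crude : ‖w - log (1 + w)‖ ≤ 2 * t + 2 := by
      linarith [norm_sub_le w (log (1 + w)), norm_log_one_add_le_of_re_nonneg hw, Real.pi_le_four]
    nlinarith

lemma norm_inv_sub_log_one_add_inv_le {z : ℂ} (hz : 0 ≤ z.re) :
    ‖z⁻¹ - log (1 + z⁻¹)‖ ≤ 20 / (‖z‖ * (‖z‖ + 1)) := by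
  rcases eq_or_ne z 0 with rfl | hz0
  · simp
  convert norm_sub_log_one_add_le_of_re_nonneg (inv_re_nonneg hz) using 2
  have : ‖z‖ ≠ 0 := norm_ne_zero_iff.2 hz0
  rw [norm_inv]
  field_simp

lemma log_div_eq_sum_log_one_add_inv {z : ℂ} (hz : 0 < z.re) (N : ℕ) :
    log ((z + N) / z) = ∑ k ∈ range N, log (1 + (z + k)⁻¹) := by
  have hz0 : z ≠ 0 := ne_of_apply_ne re hz.ne'
  induction N with
  | zero => simp [div_self hz0]
  | succ N ih =>
    have h_shift : 0 < (z + N).re := by simp only [add_re, natCast_re]; positivity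
    have h_factor : (z + (N + 1 : ℕ)) / z = (z + N) / z * (1 + (z + N)⁻¹) := by
      have : z + N ≠ 0 := ne_of_apply_ne re h_shift.ne'
      push_cast
      field_simp
      ring
    have h_ratio : 0 < ((z + N) / z).re := by
      rw [add_div, div_self hz0, add_re, one_re, div_eq_mul_inv]
      simp only [mul_re, natCast_re, natCast_im, zero_mul, sub_zero]
      linarith [mul_nonneg N.cast_nonneg (inv_re_nonneg hz.le)]
    rw [h_factor, log_mul_of_re_pos h_ratio, ih, sum_range_succ]
    simp only [add_re, one_re]
    linarith [inv_re_nonneg h_shift.le]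

lemma norm_sum_inv_sub_log_div_le {z : ℂ} (hz : 0 < z.re) (N : ℕ) :
    ‖∑ k ∈ range N, (z + k)⁻¹ - log ((z + N) / z)‖ ≤ 40 / ‖z‖ := by
  have ha : 0 < ‖z‖ := norm_pos_iff.2 (ne_of_apply_ne re hz.ne')
  have h_term (k : ℕ) :
      ‖(z + k)⁻¹ - log (1 + (z + k)⁻¹)‖ ≤ 40 * (1 / ((‖z‖ + k) * (‖z‖ + k + 1))) := by
    have h_re : 0 ≤ (z + k).re := by simp only [add_re, natCast_re]; positivity
    have h_norm := sq_norm_add_sq_le_sq_norm_add_ofReal hz.le k.cast_nonneg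
    push_cast at h_norm
    calc _ ≤ 20 / (‖z + k‖ * (‖z + k‖ + 1)) := norm_inv_sub_log_one_add_inv_le h_re
      _ = 20 * (1 / (‖z + k‖ * (‖z + k‖ + 1))) := by ring
      _ ≤ 20 * (2 / ((‖z‖ + k) * (‖z‖ + k + 1))) := by
        have := one_div_mul_add_one_le_of_sq_add_sq_le ha k.cast_nonneg (norm_nonneg _) h_norm
        linarith
      _ = _ := by ring
  rw [log_div_eq_sum_log_one_add_inv hz, ← sum_sub_distrib]
  calc _ ≤ ∑ k ∈ range N, ‖(z + k)⁻¹ - log (1 + (z + k)⁻¹)‖ := norm_sum_le _ _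
    _ ≤ 40 * ∑ k ∈ range N, 1 / ((‖z‖ + k) * (‖z‖ + k + 1)) := by
      rw [mul_sum]
      exact sum_le_sum fun k _ => h_term k
    _ ≤ 40 * (1 / ‖z‖) := by gcongr; exact sum_range_one_div_mul_add_one_le ha N
    _ = 40 / ‖z‖ := by ring

end Complex

/-- Uniform bound for partial harmonic sums against the principal logarithm. -/
theorem harmonic_minus_log_bound :
    ∃ C : ℝ, 0 < C ∧ ∀ ζ : ℂ, 0 < ζ.re → ∀ m n : ℕ, m < n →
      ‖(∑ j ∈ Finset.Ico m n, 1 / (ζ + j)) -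
          Complex.log ((ζ + n) / (ζ + m))‖ ≤ C / ‖ζ + m‖ := by
  refine ⟨40, by norm_num, fun ζ hζ m n hmn => ?_⟩
  obtain ⟨N, rfl⟩ := Nat.exists_eq_add_of_le hmn.le
  have h_re : 0 < (ζ + m).re := by simp only [add_re, natCast_re]; positivity
  convert norm_sum_inv_sub_log_div_le h_re N using 3
  · rw [sum_Ico_eq_sum_range, Nat.add_sub_cancel_left]
    push_cast
    simp only [one_div, add_assoc]
  · push_cast
    ring_nf
end

section
/- Let λ ∈ ℂ with |λ| = 1 and λ not a root of unity, let c ∈ ℂ* and let (x_n) be a sequence of complex numbers such that x_n / (λⁿ c) → 1 as n → ∞. Then the set of accumulation points of the sequence (x_n) equals the circle {z ∈ ℂ : |z| = |c|}. -/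
/-!
Since `x_n / (λⁿ c) → 1` and `λⁿ c` stays on the circle of radius `|c|`, the distance between
`x_n` and `λⁿ c` tends to `0`, so both sequences have the same subsequential limits. Those of
`λⁿ c` lie on that circle, and every point of it is one because the powers of an element of
infinite order are dense in the circle group.
-/

open Filter Complex

open Topology Asymptotics

theorem tendsto_dist_zero_of_tendsto_div_one {α 𝕜 : Type*} [NormedField 𝕜] {l : Filter α}
    {u v : α → 𝕜} {C : ℝ} (hv : ∀ a, ‖v a‖ ≤ C) (huv : Tendsto (u / v) l (𝓝 1)) :
    Tendsto (fun a => dist (u a) (v a)) l (𝓝 0) := by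
  have hvO : v =O[l] (fun _ => (1 : ℝ)) := isBigO_of_le' l fun a => by simpa using hv a
  have hsub : Tendsto (u - v) l (𝓝 0) :=
    (isLittleO_one_iff ℝ).1 ((isEquivalent_of_tendsto_one huv).isLittleO.trans_isBigO hvO)
  simpa [dist_eq_norm] using hsub.norm

namespace Circle

theorem denseRange_zpow_iff_orderOf_eq_zero {L : Circle} :
    DenseRange (L ^ · : ℤ → Circle) ↔ orderOf L = 0 := by
  let e := AddCircle.homeomorphCircle (T := 1) one_ne_zero
  obtain ⟨a, rfl⟩ := e.surjective L
  have he (b : AddCircle (1 : ℝ)) : e b = AddCircle.toCircle b :=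
    AddCircle.homeomorphCircle_apply _ b
  have hrange : Set.range (e a ^ · : ℤ → Circle) =
      e '' Set.range (· • a : ℤ → AddCircle (1 : ℝ)) := by
    rw [← Set.range_comp]
    congr 1
    ext n
    simp [he, AddCircle.toCircle_zsmul]
  have hord : orderOf (e a) = addOrderOf a := by
    rw [← orderOf_ofAdd_eq_addOrderOf, orderOf_eq_orderOf_iff]
    intro n
    rw [he, ← AddCircle.toCircle_nsmul, ← AddCircle.toCircle_zero,
      (AddCircle.injective_toCircle one_ne_zero).eq_iff]
    rfl
  rw [DenseRange, hrange, e.isDenseEmbedding.dense_image, ← DenseRange,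
    AddCircle.denseRange_zsmul_iff, hord]

theorem exists_strictMono_tendsto_pow {L : Circle} (hL : orderOf L = 0) (w : Circle) :
    ∃ φ : ℕ → ℕ, StrictMono φ ∧ Tendsto (fun k => L ^ φ k) atTop (𝓝 w) :=
  MapClusterPt.tendsto_subseq <| ((mapClusterPt_atTop_pow_tfae w L).out 0 2).2 <|
    denseRange_zpow_iff_pow.1 (denseRange_zpow_iff_orderOf_eq_zero.2 hL) w

end Circle

theorem Complex.exists_strictMono_tendsto_pow_mul {lam c z : ℂ} (hlam : ‖lam‖ = 1)
    (hord : orderOf lam = 0) (hc : c ≠ 0) (hz : ‖z‖ = ‖c‖) :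
    ∃ φ : ℕ → ℕ, StrictMono φ ∧ Tendsto (fun k => lam ^ φ k * c) atTop (𝓝 z) := by
  let L : Circle := ⟨lam, mem_sphere_zero_iff_norm.2 hlam⟩
  let W : Circle := ⟨z / c, mem_sphere_zero_iff_norm.2 <| by
    rw [norm_div, hz, div_self (norm_ne_zero_iff.2 hc)]⟩
  have hL : orderOf L = 0 := by
    rw [← orderOf_injective Circle.coeHom Subtype.coe_injective L]
    exact hord
  obtain ⟨φ, hφ, hlim⟩ := Circle.exists_strictMono_tendsto_pow hL W
  refine ⟨φ, hφ, ?_⟩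
  have hlimC : Tendsto (fun k => ((L ^ φ k : Circle) : ℂ) * c) atTop (𝓝 (W * c)) :=
    ((continuous_subtype_val.tendsto W).comp hlim).mul_const c
  rwa [show (W : ℂ) * c = z from div_mul_cancel₀ z hc] at hlimC

/-- If `x_n/(λⁿc) → 1` with `λ` an irrational rotation and `c ≠ 0`, then the
accumulation points of `(x_n)` form the circle of radius `|c|`. -/
theorem accumulation_points_asymptotic_rotation (lam c : ℂ)
    (hlam : ‖lam‖ = 1) (hirr : ∀ k : ℕ, 0 < k → lam ^ k ≠ 1)
    (hc : c ≠ 0) (x : ℕ → ℂ)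
    (hx : Tendsto (fun n => x n / (lam ^ n * c)) atTop (nhds 1)) :
    {z : ℂ | ∃ φ : ℕ → ℕ, StrictMono φ ∧ Tendsto (fun k => x (φ k)) atTop (nhds z)}
      = {z : ℂ | ‖z‖ = ‖c‖} := by
  have hclose : Tendsto (fun n => dist (x n) (lam ^ n * c)) atTop (nhds 0) :=
    tendsto_dist_zero_of_tendsto_div_one (C := ‖c‖) (fun n => by simp [hlam]) hx
  have hsubseq {φ : ℕ → ℕ} (hφ : StrictMono φ) {z : ℂ} :
      Tendsto (fun k => x (φ k)) atTop (nhds z) ↔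
        Tendsto (fun k => lam ^ φ k * c) atTop (nhds z) :=
    tendsto_iff_of_dist (hclose.comp hφ.tendsto_atTop)
  ext z
  constructor
  · rintro ⟨φ, hφ, hxz⟩
    have hnorm := ((hsubseq hφ).1 hxz).norm
    simp only [norm_mul, norm_pow, hlam, one_pow, one_mul] at hnorm
    exact tendsto_nhds_unique hnorm tendsto_const_nhds
  · intro hz
    obtain ⟨φ, hφ, hlim⟩ :=
      exists_strictMono_tendsto_pow_mul hlam (orderOf_eq_zero_iff'.2 hirr) hc hz
    exact ⟨φ, hφ, (hsubseq hφ).2 hlim⟩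
end

section
/- Let X be a set, F : X → X a bijection, B ⊆ X with F(B) ⊆ B, Ω = ∪_{n∈ℕ} F^{-n}(B). Let ψ : Ω → ℂ satisfy ψ ∘ F = ψ + 1 on Ω, let λ ∈ S¹, and let τ : B → ℂ* satisfy τ ∘ F = λ̄ τ, with the pair (ψ|_B, τ) injective on B (i.e. (ψ(p),τ(p)) = (ψ(q),τ(q)) implies p = q for p,q ∈ B). Define Φ : Ω → ℂ × ℂ* by Φ(p) = (ψ(p), λⁿτ(Fⁿ(p))) for any n with Fⁿ(p) ∈ B. Then Φ is injective on Ω. -/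
open Complex

/-!
Push both points forward into `B` with a common exponent `N`. The translation law gives
`ψ (Fᴺ p) = ψ p + N`, and cancelling `λᴺ ≠ 0` in the second coordinate of `Φ` gives
`τ (Fᴺ p) = τ (Fᴺ q)`; injectivity of `(ψ, τ)` on `B` then yields `Fᴺ p = Fᴺ q`, hence `p = q`.
-/

namespace Function

variable {X : Type*} {F : X → X} {B : Set X}

/-- The set `Ω = ⋃ₙ F⁻ⁿ(B)`. -/
def basin (F : X → X) (B : Set X) : Set X :=
  {x | ∃ n, F^[n] x ∈ B}

theorem iterate_mem_of_le (hB : Set.MapsTo F B B) {x : X} {j k : ℕ} (hjk : j ≤ k)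
    (hj : F^[j] x ∈ B) : F^[k] x ∈ B := by
  obtain ⟨d, rfl⟩ := Nat.exists_eq_add_of_le hjk
  rw [add_comm, iterate_add_apply]
  exact hB.iterate d hj

theorem mapsTo_basin (hB : Set.MapsTo F B B) : Set.MapsTo F (basin F B) (basin F B) := by
  rintro x ⟨n, hn⟩
  refine ⟨n, ?_⟩
  rw [← iterate_succ_apply]
  exact iterate_mem_of_le hB n.le_succ hn

theorem apply_iterate_eq_add_of_mapsTo {M : Type*} [AddMonoidWithOne M] {S : Set X}
    (hS : Set.MapsTo F S S) {ψ : X → M} (hψ : ∀ p ∈ S, ψ (F p) = ψ p + 1) :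
    ∀ (k : ℕ), ∀ x ∈ S, ψ (F^[k] x) = ψ x + k
  | 0, x, _ => by simp
  | k + 1, x, hx => by
    rw [iterate_succ_apply', hψ _ (hS.iterate k hx), apply_iterate_eq_add_of_mapsTo hS hψ k x hx,
      Nat.cast_succ, add_assoc]

end Function

open Function in
theorem extended_coordinates_injective_general {X : Type*} (F : X → X)
    (hF : Function.Bijective F) (B : Set X) (hB : Set.MapsTo F B B)
    (lam : ℂ) (hlam : ‖lam‖ = 1)
    (ψ τ : X → ℂ)
    (hψ : ∀ p : X, (∃ n : ℕ, F^[n] p ∈ B) → ψ (F p) = ψ p + 1)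
    (hinj : ∀ p ∈ B, ∀ q ∈ B, ψ p = ψ q → τ p = τ q → p = q)
    (Φ : X → ℂ × ℂ)
    (hΦ : ∀ (p : X) (n : ℕ), F^[n] p ∈ B → Φ p = (ψ p, lam ^ n * τ (F^[n] p))) :
    ∀ p q : X, (∃ n : ℕ, F^[n] p ∈ B) → (∃ n : ℕ, F^[n] q ∈ B) →
      Φ p = Φ q → p = q := by
  rintro p q ⟨n, hn⟩ ⟨m, hm⟩ hpq
  set N := max n m
  have hpN : F^[N] p ∈ B := iterate_mem_of_le hB (le_max_left n m) hn
  have hqN : F^[N] q ∈ B := iterate_mem_of_le hB (le_max_right n m) hm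
  rw [hΦ p N hpN, hΦ q N hqN, Prod.mk.injEq] at hpq
  have hψN := apply_iterate_eq_add_of_mapsTo (mapsTo_basin hB) hψ N
  have hlam0 : lam ≠ 0 := norm_ne_zero_iff.mp (by rw [hlam]; exact one_ne_zero)
  refine hF.injective.iterate N (hinj _ hpN _ hqN ?_ ?_)
  · rw [hψN p ⟨n, hn⟩, hψN q ⟨m, hm⟩, hpq.1]
  · exact mul_left_cancel₀ (pow_ne_zero N hlam0) hpq.2

/-- The map `Φ(p) = (ψ(p), λⁿ τ(Fⁿ(p)))` is injective on `Ω = ⋃ₙ F⁻ⁿ(B)`. -/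
theorem extended_coordinates_injective {X : Type*} (F : X → X)
    (hF : Function.Bijective F) (B : Set X) (hB : Set.MapsTo F B B)
    (lam : ℂ) (hlam : ‖lam‖ = 1)
    (ψ τ : X → ℂ) (hτ0 : ∀ p ∈ B, τ p ≠ 0)
    (hψ : ∀ p : X, (∃ n : ℕ, F^[n] p ∈ B) → ψ (F p) = ψ p + 1)
    (hτ : ∀ p ∈ B, τ (F p) = lam⁻¹ * τ p)
    (hinj : ∀ p ∈ B, ∀ q ∈ B, ψ p = ψ q → τ p = τ q → p = q)
    (Φ : X → ℂ × ℂ)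
    (hΦ : ∀ (p : X) (n : ℕ), F^[n] p ∈ B → Φ p = (ψ p, lam ^ n * τ (F^[n] p))) :
    ∀ p q : X, (∃ n : ℕ, F^[n] p ∈ B) → (∃ n : ℕ, F^[n] q ∈ B) →
      Φ p = Φ q → p = q :=
  extended_coordinates_injective_general F hF B hB lam hlam ψ τ hψ hinj Φ hΦ
end

section
/- Let Ω be a set, F : Ω → Ω, λ ∈ S¹, and suppose ψ : Ω → ℂ satisfies ψ ∘ F = ψ + 1 with Re ψ > 0 everywhere, and σ : Ω → ℂ* satisfies σ ∘ F = λ̄·e^{−1/(2ψ)}·σ. For n ∈ ℕ define τ_n : Ω → ℂ* by τ_n = √(ψ+n)·exp(−½ ∑_{j=0}^{n-1} 1/(ψ+j))·σ, using the principal square root. Then τ_n ∘ F = λ̄·τ_{n+1} for all n ∈ ℕ. -/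
open Complex

/-- `τ n p = tauWeight (ψ p) n * σ p`. -/
noncomputable def tauWeight (z : ℂ) (n : ℕ) : ℂ :=
  (z + n) ^ (1 / 2 : ℂ) * exp (-(1 / 2) * ∑ j ∈ Finset.range n, 1 / (z + j))

theorem sum_range_succ_one_div_add {K : Type*} [Field K] (z : K) (n : ℕ) :
    ∑ j ∈ Finset.range (n + 1), 1 / (z + j) =
      ∑ j ∈ Finset.range n, 1 / (z + 1 + j) + 1 / z := by
  rw [Finset.sum_range_succ']
  push_cast
  simp only [add_assoc, add_comm (1 : K), add_zero]

theorem tauWeight_add_one_mul_exp (z : ℂ) (n : ℕ) :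
    tauWeight (z + 1) n * exp (-(1 / (2 * z))) = tauWeight z (n + 1) := by
  have hexp : exp (-(1 / 2) * ∑ j ∈ Finset.range (n + 1), 1 / (z + j)) =
      exp (-(1 / 2) * ∑ j ∈ Finset.range n, 1 / (z + 1 + j)) * exp (-(1 / (2 * z))) := by
    rw [sum_range_succ_one_div_add, ← exp_add]
    ring_nf
  rw [tauWeight, tauWeight, hexp]
  push_cast
  ring_nf

theorem tau_n_functional_equation_general {Ω : Type*} (F : Ω → Ω) (lam : ℂ)
    (ψ σ : Ω → ℂ)
    (hψ : ∀ p, ψ (F p) = ψ p + 1)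
    (hσ : ∀ p, σ (F p) = lam⁻¹ * Complex.exp (-(1 / (2 * ψ p))) * σ p)
    (τ : ℕ → Ω → ℂ)
    (hτ : ∀ (n : ℕ) (p : Ω), τ n p = (ψ p + n) ^ (1 / 2 : ℂ) *
        Complex.exp (-(1 / 2) * ∑ j ∈ Finset.range n, 1 / (ψ p + j)) * σ p) :
    ∀ (n : ℕ) (p : Ω), τ n (F p) = lam⁻¹ * τ (n + 1) p := by
  intro n p
  have hτw : ∀ m q, τ m q = tauWeight (ψ q) m * σ q := hτ
  rw [hτw, hτw, hψ, hσ, ← tauWeight_add_one_mul_exp]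
  ring

/-- The maps `τ_n = √(ψ+n)·exp(−½ ∑_{j<n} 1/(ψ+j))·σ` satisfy
`τ_n ∘ F = λ⁻¹ τ_{n+1}`. -/
theorem tau_n_functional_equation {Ω : Type*} (F : Ω → Ω) (lam : ℂ)
    (hlam : ‖lam‖ = 1) (ψ σ : Ω → ℂ)
    (hψre : ∀ p, 0 < (ψ p).re)
    (hψ : ∀ p, ψ (F p) = ψ p + 1)
    (hσ0 : ∀ p, σ p ≠ 0)
    (hσ : ∀ p, σ (F p) = lam⁻¹ * Complex.exp (-(1 / (2 * ψ p))) * σ p)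
    (τ : ℕ → Ω → ℂ)
    (hτ : ∀ (n : ℕ) (p : Ω), τ n p = (ψ p + n) ^ (1 / 2 : ℂ) *
        Complex.exp (-(1 / 2) * ∑ j ∈ Finset.range n, 1 / (ψ p + j)) * σ p) :
    ∀ (n : ℕ) (p : Ω), τ n (F p) = lam⁻¹ * τ (n + 1) p :=
  tau_n_functional_equation_general F lam ψ σ hψ hσ τ hτ
end
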